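/- Let P be Lebesgue measure on [0,1] and A_{2^{i−1}+k} = [k/2^i, (k+1)/2^i] ∪ [1/2, 1] for i ≥ 1, 0 ≤ k < 2^{i−1}. Then for every strictly increasing τ: ℕ → ℕ, lim_{p→0+} limsup_{n→∞} E[((∑_{i=1}^n 1_{A_{τ(i)}})/(∑_{i=1}^n P(A_{τ(i)})))^p] ≤ 1/2. -/

import Mathlib

open MeasureTheory Filter Set Topology

/-!
Every event `A_n` contains `B = [1/2, 1]`, of probability `1/2`, so the normalized count
`f = (∑ 1_{A_{τ i}}) / ∑ P(A_{τ i})` is at most `2`; on `B` this gives `∫_B f^p ≤ 2^p/2`.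
Off `B` the events are dyadic intervals of length at most `1/n`, and `f^p ≤ δ^p + 2^p f / δ`
bounds `∫_{Bᶜ} f^p` by `δ^p` plus a multiple of a Cesàro mean of `P(A_{τ i} \ B) → 0`.
Letting `n → ∞`, then `δ → 0`, then `p → 0` leaves `1/2`.
-/

/-- For `n = 2^(i-1) + k` with `i ≥ 1` and `0 ≤ k < 2^(i-1)`, the event
`A_n = [k/2^i, (k+1)/2^i] ∪ [1/2, 1]`. Here `Nat.log 2 n = i - 1`. -/
noncomputable def dyadicA (n : ℕ) : Set ℝ :=
  Set.Icc (((n : ℝ) - 2 ^ Nat.log 2 n) / 2 ^ (Nat.log 2 n + 1))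
      (((n : ℝ) - 2 ^ Nat.log 2 n + 1) / 2 ^ (Nat.log 2 n + 1)) ∪
    Set.Icc (1 / 2 : ℝ) 1

lemma rpow_le_rpow_add_div_mul {r M δ p : ℝ} (hp : 0 < p) (hδ : 0 < δ) (hr : 0 ≤ r)
    (hrM : r ≤ M) : r ^ p ≤ δ ^ p + M ^ p / δ * r := by
  have hMp : 0 ≤ M ^ p / δ := div_nonneg (Real.rpow_nonneg (hr.trans hrM) p) hδ.le
  rcases le_or_gt r δ with hrδ | hδr
  · have := Real.rpow_le_rpow hr hrδ hp.le
    nlinarith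
  · calc r ^ p ≤ M ^ p := Real.rpow_le_rpow hr hrM hp.le
      _ = M ^ p / δ * δ := (div_mul_cancel₀ _ hδ.ne').symm
      _ ≤ δ ^ p + M ^ p / δ * r := by
        nlinarith [Real.rpow_nonneg hδ.le p]

lemma le_of_forall_pos_le_add_rpow {a b p : ℝ} (hp : 0 < p) (h : ∀ δ > 0, a ≤ b + δ ^ p) :
    a ≤ b :=
  le_of_forall_pos_le_add fun ε hε => by
    simpa [Real.rpow_inv_rpow hε.le hp.ne'] using h (ε ^ p⁻¹) (Real.rpow_pos_of_pos hε _)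

lemma limsup_le_of_le_add_mul_of_tendsto_zero {F r : ℕ → ℝ} {a K : ℝ} (hF : ∀ n, 0 ≤ F n)
    (hr : Tendsto r atTop (𝓝 0)) (h : ∀ᶠ n in atTop, F n ≤ a + K * r n) :
    limsup F atTop ≤ a := by
  have hlim : Tendsto (fun n => a + K * r n) atTop (𝓝 a) := by
    simpa using (hr.const_mul K).const_add a
  calc limsup F atTop ≤ limsup (fun n => a + K * r n) atTop :=
        limsup_le_limsup h (isCoboundedUnder_le_of_le atTop hF) hlim.isBoundedUnder_le
    _ = a := hlim.limsup_eq

lemma Filter.Tendsto.cesaro_Icc {u : ℕ → ℝ} {l : ℝ} (h : Tendsto u atTop (𝓝 l)) :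
    Tendsto (fun n : ℕ => (∑ i ∈ Finset.Icc 1 n, u i) / n) atTop (𝓝 l) := by
  refine ((tendsto_add_atTop_iff_nat 1).2 h).cesaro.congr fun n => ?_
  rw [← Finset.Ico_add_one_right_eq_Icc, Finset.sum_Ico_eq_sum_range, add_tsub_cancel_right,
    inv_mul_eq_div]
  simp only [add_comm 1]

section
variable {α : Type*} [MeasurableSpace α] {μ : Measure α} [IsProbabilityMeasure μ]

lemma integral_rpow_le_of_le {f : α → ℝ} {s : Set α} {M δ p : ℝ} (hf : Measurable f)
    (hs : MeasurableSet s) (hf0 : ∀ x, 0 ≤ f x) (hfM : ∀ x, f x ≤ M) (hp : 0 < p) (hδ : 0 < δ) :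
    ∫ x, f x ^ p ∂μ ≤ M ^ p * μ.real s + δ ^ p + M ^ p / δ * ∫ x in sᶜ, f x ∂μ := by
  have hfp_le : ∀ x, f x ^ p ≤ M ^ p := fun x => Real.rpow_le_rpow (hf0 x) (hfM x) hp.le
  have hfp_int : Integrable (fun x => f x ^ p) μ :=
    (integrable_const (M ^ p)).mono' (hf.pow_const p).aestronglyMeasurable
      (ae_of_all _ fun x => by
        rw [Real.norm_of_nonneg (Real.rpow_nonneg (hf0 x) p)]; exact hfp_le x)
  have hf_int : Integrable f μ :=
    (integrable_const M).mono' hf.aestronglyMeasurable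
      (ae_of_all _ fun x => by rw [Real.norm_of_nonneg (hf0 x)]; exact hfM x)
  have h_on_s : ∫ x in s, f x ^ p ∂μ ≤ M ^ p * μ.real s := by
    calc ∫ x in s, f x ^ p ∂μ ≤ ∫ _ in s, M ^ p ∂μ :=
          setIntegral_mono hfp_int.integrableOn (integrable_const _) hfp_le
      _ = M ^ p * μ.real s := by rw [setIntegral_const, smul_eq_mul, mul_comm]
  have h_on_compl : ∫ x in sᶜ, f x ^ p ∂μ ≤ δ ^ p + M ^ p / δ * ∫ x in sᶜ, f x ∂μ := by
    calc ∫ x in sᶜ, f x ^ p ∂μ ≤ ∫ x in sᶜ, (δ ^ p + M ^ p / δ * f x) ∂μ :=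
          setIntegral_mono hfp_int.integrableOn
            ((integrable_const _).add (hf_int.const_mul _)).integrableOn
            fun x => rpow_le_rpow_add_div_mul hp hδ (hf0 x) (hfM x)
      _ = δ ^ p * μ.real sᶜ + M ^ p / δ * ∫ x in sᶜ, f x ∂μ := by
          rw [integral_add (integrable_const _) (hf_int.const_mul _).integrableOn,
            setIntegral_const, integral_const_mul, smul_eq_mul, mul_comm]
      _ ≤ δ ^ p + M ^ p / δ * ∫ x in sᶜ, f x ∂μ := by
          gcongr
          exact mul_le_of_le_one_right (Real.rpow_nonneg hδ.le p) measureReal_le_one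
  rw [← integral_add_compl hs hfp_int]
  linarith

open Finset in
lemma integral_rpow_sum_indicator_div_le {ι : Type*} {t : Finset ι} {A : ι → Set α}
    {B : Set α} (hA : ∀ i ∈ t, MeasurableSet (A i)) (hB : MeasurableSet B)
    (hBA : ∀ i ∈ t, B ⊆ A i) (hB0 : 0 < μ.real B) {p δ : ℝ} (hp : 0 < p) (hδ : 0 < δ) :
    ∫ x, ((∑ i ∈ t, (A i).indicator 1 x) / ∑ i ∈ t, μ.real (A i)) ^ p ∂μ
      ≤ (μ.real B)⁻¹ ^ p * μ.real B + δ ^ p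
        + (μ.real B)⁻¹ ^ p / δ / μ.real B * ((∑ i ∈ t, μ.real (A i \ B)) / #t) := by
  set m := ∑ i ∈ t, μ.real (A i)
  have hm0 : 0 ≤ m := sum_nonneg fun _ _ => measureReal_nonneg
  have hm : #t * μ.real B ≤ m := by
    rw [← nsmul_eq_mul, ← sum_const]
    exact sum_le_sum fun i hi => measureReal_mono (hBA i hi)
  have hS0 : ∀ x, 0 ≤ ∑ i ∈ t, (A i).indicator (1 : α → ℝ) x := fun x =>
    sum_nonneg fun i _ => indicator_nonneg (fun _ _ => zero_le_one) x
  have hS_le : ∀ x, ∑ i ∈ t, (A i).indicator (1 : α → ℝ) x ≤ (μ.real B)⁻¹ * m := fun x =>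
    calc ∑ i ∈ t, (A i).indicator (1 : α → ℝ) x ≤ ∑ _i ∈ t, (1 : ℝ) :=
          sum_le_sum fun i _ => indicator_le_self' (fun _ _ => zero_le_one) x
      _ = (μ.real B)⁻¹ * (#t * μ.real B) := by
          rw [sum_const, nsmul_one, mul_comm, mul_assoc, mul_inv_cancel₀ hB0.ne', mul_one]
      _ ≤ (μ.real B)⁻¹ * m := by gcongr
  have h_compl : ∫ x in Bᶜ, (∑ i ∈ t, (A i).indicator 1 x) / m ∂μ
      = (∑ i ∈ t, μ.real (A i \ B)) / m := by
    rw [integral_div, integral_finsetSum _ fun i hi => ?_]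
    · congr 1
      refine sum_congr rfl fun i hi => ?_
      rw [integral_indicator_one (hA i hi), measureReal_restrict_apply (hA i hi), sdiff_eq]
    · exact (integrable_const 1).indicator (hA i hi)
  have h_rem : (∑ i ∈ t, μ.real (A i \ B)) / m ≤ (∑ i ∈ t, μ.real (A i \ B)) / #t / μ.real B := by
    rcases t.eq_empty_or_nonempty with rfl | ht
    · simp
    rw [div_div]
    exact div_le_div_of_nonneg_left (sum_nonneg fun _ _ => measureReal_nonneg)
      (by positivity) hm
  calc _ ≤ (μ.real B)⁻¹ ^ p * μ.real B + δ ^ p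
        + (μ.real B)⁻¹ ^ p / δ * ∫ x in Bᶜ, (∑ i ∈ t, (A i).indicator 1 x) / m ∂μ :=
        integral_rpow_le_of_le
          ((measurable_sum _ fun i hi => measurable_one.indicator (hA i hi)).div_const m)
          hB (fun x => div_nonneg (hS0 x) hm0)
          (fun x => div_le_of_le_mul₀ hm0 (inv_nonneg.2 hB0.le) (hS_le x)) hp hδ
    _ ≤ (μ.real B)⁻¹ ^ p * μ.real B + δ ^ p
        + (μ.real B)⁻¹ ^ p / δ * ((∑ i ∈ t, μ.real (A i \ B)) / #t / μ.real B) := by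
        rw [h_compl]; gcongr
    _ = _ := by ring

lemma limsup_integral_rpow_sum_indicator_div_le {A : ℕ → Set α} {B : Set α}
    (hA : ∀ n, MeasurableSet (A n)) (hB : MeasurableSet B) (hBA : ∀ n, B ⊆ A n)
    (hB0 : 0 < μ.real B) (h_diff : Tendsto (fun n => μ.real (A n \ B)) atTop (𝓝 0))
    {p : ℝ} (hp : 0 < p) :
    limsup (fun n => ∫ x, ((∑ i ∈ Finset.Icc 1 n, (A i).indicator 1 x) /
        ∑ i ∈ Finset.Icc 1 n, μ.real (A i)) ^ p ∂μ) atTop ≤ (μ.real B)⁻¹ ^ p * μ.real B := by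
  refine le_of_forall_pos_le_add_rpow hp fun δ hδ => ?_
  refine limsup_le_of_le_add_mul_of_tendsto_zero (K := (μ.real B)⁻¹ ^ p / δ / μ.real B)
    (fun n => integral_nonneg fun x => ?_) h_diff.cesaro_Icc (Eventually.of_forall fun n => ?_)
  · exact Real.rpow_nonneg (div_nonneg
      (Finset.sum_nonneg fun i _ => indicator_nonneg (fun _ _ => zero_le_one) x)
      (Finset.sum_nonneg fun _ _ => measureReal_nonneg)) p
  · have := integral_rpow_sum_indicator_div_le (t := Finset.Icc 1 n) (fun i _ => hA i) hB
      (fun i _ => hBA i) hB0 hp hδ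
    rwa [Nat.card_Icc, add_tsub_cancel_right] at this

end

lemma measurableSet_dyadicA (n : ℕ) : MeasurableSet (dyadicA n) :=
  measurableSet_Icc.union measurableSet_Icc

lemma Icc_half_one_subset_dyadicA (n : ℕ) : Icc (1 / 2 : ℝ) 1 ⊆ dyadicA n :=
  subset_union_right

lemma volume_real_dyadicA_diff_le {n : ℕ} (hn : 1 ≤ n) :
    volume.real (dyadicA n \ Icc (1 / 2 : ℝ) 1) ≤ 1 / n := by
  have hn_lt : (n : ℝ) < 2 ^ (Nat.log 2 n + 1) := by
    exact_mod_cast Nat.lt_pow_succ_log_self one_lt_two n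
  calc volume.real (dyadicA n \ Icc (1 / 2 : ℝ) 1)
      ≤ volume.real (Icc (((n : ℝ) - 2 ^ Nat.log 2 n) / 2 ^ (Nat.log 2 n + 1))
          (((n : ℝ) - 2 ^ Nat.log 2 n + 1) / 2 ^ (Nat.log 2 n + 1))) :=
        measureReal_mono (by rw [dyadicA, union_sdiff_right]; exact sdiff_subset)
          measure_Icc_lt_top.ne
    _ = 1 / 2 ^ (Nat.log 2 n + 1) := by
        rw [Real.volume_real_Icc_of_le (by gcongr; linarith)]
        ring
    _ ≤ 1 / n := by gcongr

lemma tendsto_measureReal_restrict_dyadicA_diff (s : Set ℝ) :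
    Tendsto (fun n => (volume.restrict s).real (dyadicA n \ Icc (1 / 2 : ℝ) 1)) atTop (𝓝 0) := by
  refine squeeze_zero' (Eventually.of_forall fun _ => measureReal_nonneg)
    ((eventually_ge_atTop 1).mono fun n hn => ?_) tendsto_one_div_atTop_nhds_zero_nat
  have h_fin : volume (dyadicA n \ Icc (1 / 2 : ℝ) 1) ≠ ⊤ :=
    measure_ne_top_of_subset sdiff_subset
      (measure_union_ne_top measure_Icc_lt_top.ne measure_Icc_lt_top.ne)
  exact (ENNReal.toReal_mono h_fin (Measure.restrict_apply_le _ _)).trans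
    (volume_real_dyadicA_diff_le hn)

theorem dyadic_MS_subsequence_le_half_general (τ : ℕ → ℕ) (hτ : StrictMono τ)
    (L : ℝ)
    (hL : Tendsto (fun p : ℝ =>
        Filter.limsup (fun n =>
          ∫ x, ((∑ i ∈ Finset.Icc 1 n, (dyadicA (τ i)).indicator (1 : ℝ → ℝ) x) /
                (∑ i ∈ Finset.Icc 1 n,
                  ((volume.restrict (Set.Icc (0 : ℝ) 1)) (dyadicA (τ i))).toReal)) ^ p
              ∂(volume.restrict (Set.Icc (0 : ℝ) 1))) atTop)
      (nhdsWithin 0 (Set.Ioi 0)) (nhds L)) :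
    L ≤ 1 / 2 := by
  set μ := volume.restrict (Icc (0 : ℝ) 1)
  have : IsProbabilityMeasure μ := ⟨by simp [μ]⟩
  set B := Icc (1 / 2 : ℝ) 1
  have hμB : μ.real B = 1 / 2 := by
    rw [measureReal_restrict_apply measurableSet_Icc,
      inter_eq_left.2 (Icc_subset_Icc (by norm_num) le_rfl),
      Real.volume_real_Icc_of_le (by norm_num)]
    norm_num
  have hlim : Tendsto (fun p : ℝ => (μ.real B)⁻¹ ^ p * μ.real B) (𝓝[>] 0) (𝓝 (μ.real B)) := by
    have := ((Real.continuousAt_const_rpow (a := (μ.real B)⁻¹) (b := 0) (by simp [hμB])).tendsto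
      |>.mono_left (nhdsWithin_le_nhds (s := Ioi 0))).mul_const (μ.real B)
    rwa [Real.rpow_zero, one_mul] at this
  rw [← hμB]
  refine le_of_tendsto_of_tendsto hL hlim (eventually_mem_nhdsWithin.mono fun p hp => ?_)
  exact limsup_integral_rpow_sum_indicator_div_le (fun n => measurableSet_dyadicA (τ n))
    measurableSet_Icc (fun n => Icc_half_one_subset_dyadicA (τ n)) (by rw [hμB]; norm_num)
    ((tendsto_measureReal_restrict_dyadicA_diff _).comp hτ.tendsto_atTop) hp

theorem dyadic_MS_subsequence_le_half (τ : ℕ → ℕ) (hτ : StrictMono τ)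
    (hτ1 : ∀ n, 1 ≤ τ n) (L : ℝ)
    (hL : Tendsto (fun p : ℝ =>
        Filter.limsup (fun n =>
          ∫ x, ((∑ i ∈ Finset.Icc 1 n, (dyadicA (τ i)).indicator (1 : ℝ → ℝ) x) /
                (∑ i ∈ Finset.Icc 1 n,
                  ((volume.restrict (Set.Icc (0 : ℝ) 1)) (dyadicA (τ i))).toReal)) ^ p
              ∂(volume.restrict (Set.Icc (0 : ℝ) 1))) atTop)
      (nhdsWithin 0 (Set.Ioi 0)) (nhds L)) :
    L ≤ 1 / 2 :=
  dyadic_MS_subsequence_le_half_general τ hτ L hL
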